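/- Let p = r₁(x)·s₂(y) − r₂(y)·s₁(x) be a near-separated polynomial in K[x₁,…,xₙ,y₁,…,yₙ], where r₁,s₁ depend on x₁,…,xₙ, r₂,s₂ depend on y₁,…,yₙ, neither pair being associated. Then the total degree of p with respect to the variables x₁,…,xₙ equals max(deg r₁, deg s₁), and the total degree of p with respect to y₁,…,yₙ equals max(deg r₂, deg s₂). -/

import Mathlib

/-!
Write `p = r₁(x) s₂(y) - s₁(x) r₂(y)` and view it as a polynomial in `x` with coefficients in
`K[y]`: its coefficient at a monomial `m` is `a • s₂ - b • r₂`, where `a` and `b` are the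
coefficients of `m` in `r₁` and `s₁`. Two nonzero polynomials that are not associated are linearly
independent over `K`, so this coefficient vanishes only when `a = b = 0`. Hence the `x`-support of
`p` is the union of the supports of `r₁` and `s₁`, and its `x`-degree is `max(deg r₁, deg s₁)`;
the `y`-degree follows by exchanging the two sets of variables.
-/

open MvPolynomial

noncomputable def degX {K : Type*} [CommRing K] {n : ℕ}
    (p : MvPolynomial (Fin n ⊕ Fin n) K) : ℕ :=
  ((sumAlgEquiv K (Fin n) (Fin n)) p).totalDegree

noncomputable def degY {K : Type*} [CommRing K] {n : ℕ}
    (p : MvPolynomial (Fin n ⊕ Fin n) K) : ℕ :=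
  ((sumAlgEquiv K (Fin n) (Fin n)) (rename (Equiv.sumComm (Fin n) (Fin n)) p)).totalDegree

namespace MvPolynomial

variable {K σ τ : Type*}

theorem ne_zero_of_totalDegree_pos [CommSemiring K] {p : MvPolynomial σ K}
    (hp : 0 < p.totalDegree) : p ≠ 0 := by
  rintro rfl
  simp at hp

theorem sumAlgEquiv_rename_inl [CommSemiring K] (p : MvPolynomial σ K) :
    sumAlgEquiv K σ τ (rename Sum.inl p) = map C p :=
  AlgHom.congr_fun (sumAlgEquiv_comp_rename_inl K σ τ) p

theorem sumAlgEquiv_rename_inr [CommSemiring K] (p : MvPolynomial τ K) :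
    sumAlgEquiv K σ τ (rename Sum.inr p) = C p :=
  AlgHom.congr_fun (sumAlgEquiv_comp_rename_inr K σ τ) p

theorem support_C_mul_map_C_sub [CommRing K] [DecidableEq σ] {A E : MvPolynomial σ K}
    {B D : MvPolynomial τ K} (hBD : LinearIndependent K ![B, D]) :
    (C B * map C A - C D * map C E).support = A.support ∪ E.support := by
  ext m
  have hcoeff : coeff m (C B * map C A - C D * map C E) = coeff m A • B - coeff m E • D := by
    rw [coeff_sub, coeff_C_mul, coeff_C_mul, coeff_map, coeff_map, smul_eq_C_mul, smul_eq_C_mul,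
      mul_comm B, mul_comm D]
  have hindep := LinearIndependent.pair_iff.1 hBD (coeff m A) (-coeff m E)
  rw [neg_smul, ← sub_eq_add_neg, neg_eq_zero] at hindep
  simp only [mem_support_iff, Finset.mem_union, hcoeff, ne_eq, ← not_and_or]
  exact not_congr ⟨hindep, by rintro ⟨ha, he⟩; simp [ha, he]⟩

theorem totalDegree_C_mul_map_C_sub [CommRing K] {A E : MvPolynomial σ K}
    {B D : MvPolynomial τ K} (hBD : LinearIndependent K ![B, D]) :
    (C B * map C A - C D * map C E).totalDegree = max A.totalDegree E.totalDegree := by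
  classical
  rw [totalDegree, support_C_mul_map_C_sub hBD, Finset.sup_union]
  rfl

theorem totalDegree_sumAlgEquiv_rename_sub [CommRing K] {A E : MvPolynomial σ K}
    {B D : MvPolynomial τ K} (hBD : LinearIndependent K ![B, D]) :
    (sumAlgEquiv K σ τ (rename Sum.inr B * rename Sum.inl A -
      rename Sum.inr D * rename Sum.inl E)).totalDegree = max A.totalDegree E.totalDegree := by
  simp only [map_sub, map_mul, sumAlgEquiv_rename_inl, sumAlgEquiv_rename_inr]
  exact totalDegree_C_mul_map_C_sub hBD

theorem linearIndependent_pair_of_not_associated [Field K] {r s : MvPolynomial σ K}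
    (hr : r ≠ 0) (hs : s ≠ 0) (h : ¬Associated r s) : LinearIndependent K ![r, s] := by
  refine (LinearIndependent.pair_iff' hr).2 fun a has => h ?_
  have ha : a ≠ 0 := by
    rintro rfl
    exact hs (by simpa using has.symm)
  refine ⟨((isUnit_iff_ne_zero.2 ha).map C).unit, ?_⟩
  rw [IsUnit.unit_spec, ← has, smul_eq_C_mul, mul_comm]

end MvPolynomial

/-- For a near-separated polynomial `p = r₁(x)s₂(y) − r₂(y)s₁(x)` with
neither pair associated, the degree of `p` in the `x`-variables is `max(deg r₁, deg s₁)`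
and the degree in the `y`-variables is `max(deg r₂, deg s₂)`. -/
theorem near_separated_degrees
    {K : Type*} [Field K] {n : ℕ}
    (r₁ s₁ r₂ s₂ : MvPolynomial (Fin n) K)
    (hr₁ : 0 < r₁.totalDegree) (hs₁ : 0 < s₁.totalDegree)
    (hr₂ : 0 < r₂.totalDegree) (hs₂ : 0 < s₂.totalDegree)
    (hna₁ : ¬ Associated r₁ s₁) (hna₂ : ¬ Associated r₂ s₂)
    (p : MvPolynomial (Fin n ⊕ Fin n) K)
    (hp : p = rename Sum.inl r₁ * rename Sum.inr s₂ - rename Sum.inr r₂ * rename Sum.inl s₁) :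
    degX p = max r₁.totalDegree s₁.totalDegree ∧
    degY p = max r₂.totalDegree s₂.totalDegree := by
  have hind₁ := linearIndependent_pair_of_not_associated
    (ne_zero_of_totalDegree_pos hr₁) (ne_zero_of_totalDegree_pos hs₁) hna₁
  have hind₂ := linearIndependent_pair_of_not_associated
    (ne_zero_of_totalDegree_pos hr₂) (ne_zero_of_totalDegree_pos hs₂) hna₂
  have hswap : rename (Equiv.sumComm (Fin n) (Fin n)) p =
      rename Sum.inr r₁ * rename Sum.inl s₂ - rename Sum.inr s₁ * rename Sum.inl r₂ := by
    rw [hp, map_sub, map_mul, map_mul, rename_rename, rename_rename, rename_rename, rename_rename,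
      mul_comm (rename _ s₁)]
    rfl
  constructor
  · rw [degX, hp, mul_comm (rename Sum.inl r₁)]
    exact totalDegree_sumAlgEquiv_rename_sub (LinearIndependent.pair_symm_iff.1 hind₂)
  · rw [degY, hswap, totalDegree_sumAlgEquiv_rename_sub hind₁, max_comm]
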